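/- arXiv:1803.03970 — 4 statements merged into one kernel-verified Lean document; each statement's English description precedes it below -/
import Mathlib

section
/- Let f : ℝ → ℝ be causal, i.e. f(t) = 0 for all t < 0, and let α₁, α₂ ≥ 0 be real numbers. Then for every t ∈ ℝ the generalized finite difference operators satisfy the composition property Δ^{α₁}(Δ^{α₂} f)(t) = Δ^{α₁+α₂} f(t); all sums involved have only finitely many nonzero terms because f is causal (only indices k with t − k ≥ 0 contribute). -/
/-!
For causal `f` and `t < N`, every sum involved stops before index `N`. Expanding the left side
gives the triangular double sum of `(-1)^(j+k) binom(α₁, j) binom(α₂, k) f(t - (j + k))` over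
`j + k < N`; grouping it by `n = j + k` turns the coefficient of `f(t - n)` into
`(-1)^n binom(α₁ + α₂, n)` by the Chu–Vandermonde identity.
-/

/-- Generalized binomial coefficient: binom(α, k) = (∏_{i=0}^{k-1} (α - i)) / k!. -/
noncomputable def gbinom (x : ℝ) (k : ℕ) : ℝ :=
  (∏ i ∈ Finset.range k, (x - i)) / k.factorial

/-- Generalized finite difference operator:
Δ^α f(t) := ∑_{k∈ℕ} (−1)^k binom(α, k) f(t − k). -/
noncomputable def gdiff (α : ℝ) (f : ℝ → ℝ) (t : ℝ) : ℝ :=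
  ∑' k : ℕ, (-1 : ℝ) ^ k * gbinom α k * f (t - k)

open Finset

theorem gbinom_eq_ringChoose (x : ℝ) (k : ℕ) : gbinom x k = Ring.choose x k := by
  rw [Ring.choose_eq_smul, ← Polynomial.aeval_eq_smeval, ← Polynomial.eval_map_algebraMap,
    descPochhammer_map, descPochhammer_eval_eq_prod_range, gbinom, smul_eq_mul, div_eq_inv_mul]

theorem gbinom_add (x y : ℝ) (n : ℕ) :
    gbinom (x + y) n = ∑ ij ∈ antidiagonal n, gbinom x ij.1 * gbinom y ij.2 := by
  simp only [gbinom_eq_ringChoose]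
  exact Ring.add_choose_eq n (Commute.all x y)

theorem gdiff_eq_sum_range {α t : ℝ} {f : ℝ → ℝ} {N : ℕ} (hf : ∀ k, N ≤ k → f (t - k) = 0) :
    gdiff α f t = ∑ k ∈ range N, (-1 : ℝ) ^ k * gbinom α k * f (t - k) :=
  tsum_eq_sum fun k hk => by rw [hf k (by simpa using hk), mul_zero]

def Causal (f : ℝ → ℝ) : Prop := ∀ t < 0, f t = 0

namespace Causal

variable {f : ℝ → ℝ}

theorem apply_sub_natCast (hf : Causal f) {t : ℝ} {N k : ℕ} (ht : t < N) (hk : N ≤ k) :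
    f (t - k) = 0 :=
  hf _ (by linarith [show (N : ℝ) ≤ k by exact_mod_cast hk])

theorem gdiff_eq_sum_range (hf : Causal f) (α : ℝ) {t : ℝ} {N : ℕ} (ht : t < N) :
    gdiff α f t = ∑ k ∈ range N, (-1 : ℝ) ^ k * gbinom α k * f (t - k) :=
  _root_.gdiff_eq_sum_range fun _ => hf.apply_sub_natCast ht

protected theorem gdiff (hf : Causal f) (α : ℝ) : Causal (gdiff α f) := fun t ht => by
  rw [hf.gdiff_eq_sum_range α (N := 0) (mod_cast ht), sum_range_zero]

theorem gdiff_gdiff (hf : Causal f) (α₁ α₂ t : ℝ) :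
    gdiff α₁ (gdiff α₂ f) t = gdiff (α₁ + α₂) f t := by
  obtain ⟨N, hN⟩ := exists_nat_gt t
  let term : ℕ → ℕ → ℝ := fun j k =>
    (-1 : ℝ) ^ j * gbinom α₁ j * ((-1 : ℝ) ^ k * gbinom α₂ k * f (t - (j + k : ℕ)))
  have inner (j : ℕ) (hj : j ∈ range N) : (-1 : ℝ) ^ j * gbinom α₁ j * gdiff α₂ f (t - j) =
      ∑ k ∈ range (N - j), term j k := by
    have htj : t - j < (N - j : ℕ) := by
      rw [Nat.cast_sub (mem_range.mp hj).le]; linarith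
    rw [hf.gdiff_eq_sum_range α₂ htj, mul_sum]
    simp only [term, Nat.cast_add, sub_sub]
  have antidiag (n : ℕ) : ∑ j ∈ range (n + 1), term j (n - j) =
      (-1 : ℝ) ^ n * gbinom (α₁ + α₂) n * f (t - n) := by
    rw [gbinom_add, Nat.sum_antidiagonal_eq_sum_range_succ (fun i j => gbinom α₁ i * gbinom α₂ j),
      mul_sum, sum_mul]
    refine sum_congr rfl fun j hj => ?_
    have hjn : j + (n - j) = n := Nat.add_sub_cancel' (Nat.lt_succ_iff.mp (mem_range.mp hj))
    have hsign : (-1 : ℝ) ^ n = (-1) ^ j * (-1) ^ (n - j) := by rw [← pow_add, hjn]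
    simp only [term, hjn, hsign]
    ring
  calc gdiff α₁ (gdiff α₂ f) t
      = ∑ j ∈ range N, ∑ k ∈ range (N - j), term j k := by
        rw [(hf.gdiff α₂).gdiff_eq_sum_range α₁ hN]; exact sum_congr rfl inner
    _ = ∑ n ∈ range N, ∑ j ∈ range (n + 1), term j (n - j) := (sum_range_diag_flip N term).symm
    _ = gdiff (α₁ + α₂) f t := by
        rw [hf.gdiff_eq_sum_range _ hN]; exact sum_congr rfl fun n _ => antidiag n

end Causal

theorem gdiff_comp_general (f : ℝ → ℝ) (hf : ∀ t < (0 : ℝ), f t = 0)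
    (α₁ α₂ : ℝ) (t : ℝ) :
    gdiff α₁ (gdiff α₂ f) t = gdiff (α₁ + α₂) f t :=
  Causal.gdiff_gdiff hf α₁ α₂ t

/-- Composition property of the generalized finite difference operator for causal
functions: Δ^{α₁}(Δ^{α₂} f)(t) = Δ^{α₁+α₂} f(t). -/
theorem gdiff_comp (f : ℝ → ℝ) (hf : ∀ t < (0 : ℝ), f t = 0)
    (α₁ α₂ : ℝ) (hα₁ : 0 ≤ α₁) (hα₂ : 0 ≤ α₂) (t : ℝ) :
    gdiff α₁ (gdiff α₂ f) t = gdiff (α₁ + α₂) f t :=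
  gdiff_comp_general f hf α₁ α₂ t
end

section
/- Let α > 1 and 0 < γ < 1. Then for every t > 0 the Caputo fractional derivative of order γ of the fractional B-spline B_α is given by the explicit differentiation rule D^γ B_α(t) = Δ^{α+1} t_+^{α−γ} / Γ(α−γ+1); explicitly, (1/Γ(1−γ)) ∫₀ᵗ [ (α/Γ(α+1)) ∑_{k∈ℕ, k≤τ} (−1)^k binom(α+1, k) (τ−k)^{α−1} ] (t−τ)^{−γ} dτ = (1/Γ(α−γ+1)) ∑_{k∈ℕ, k≤t} (−1)^k binom(α+1, k) (t−k)^{α−γ}, where the inner finite sum is the pointwise derivative B_α′(τ). -/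
/-!
Writing the derivative of `B_α` with truncated powers, `B_α′(τ) = ∑ₖ cₖ (τ - k)₊^(α-1) / Γ(α)`
with `cₖ = (-1)ᵏ binom(α+1, k)`, the Caputo derivative becomes a finite sum of
Riemann–Liouville integrals of shifted truncated powers. Each of them is a scaled Beta integral,
`∫₀ᵗ (τ - k)₊^(a-1) (t - τ)^(b-1) dτ = B(a, b) (t - k)₊^(a+b-1)`,
and with `a = α`, `b = 1 - γ` the Gamma factors collapse to `1 / Γ(α - γ + 1)`.
-/

open intervalIntegral Real MeasureTheory Set Finset

noncomputable def truncRpow (x a : ℝ) : ℝ := if 0 < x then x ^ a else 0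

section TruncRpow

variable {x a : ℝ}

theorem truncRpow_of_pos (hx : 0 < x) : truncRpow x a = x ^ a := if_pos hx

theorem truncRpow_of_nonpos (hx : x ≤ 0) : truncRpow x a = 0 := if_neg hx.not_gt

theorem truncRpow_eq_max_rpow (ha : a ≠ 0) : truncRpow x a = max x 0 ^ a := by
  rcases lt_or_ge 0 x with hx | hx
  · rw [truncRpow_of_pos hx, max_eq_left hx.le]
  · rw [truncRpow_of_nonpos hx, max_eq_right hx, zero_rpow ha]

theorem rpow_eq_truncRpow (hx : 0 ≤ x) (ha : a ≠ 0) : x ^ a = truncRpow x a := by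
  rw [truncRpow_eq_max_rpow ha, max_eq_left hx]

theorem continuous_truncRpow (ha : 0 < a) : Continuous fun x => truncRpow x a := by
  simp_rw [truncRpow_eq_max_rpow ha.ne']
  exact (continuous_id.max continuous_const).rpow_const fun _ => Or.inr ha.le

end TruncRpow

theorem sum_range_floor_rpow_eq_sum_truncRpow (c : ℕ → ℝ) {x a : ℝ} (hx : 0 ≤ x)
    (ha : a ≠ 0) {N : ℕ} (hN : ⌊x⌋₊ < N) :
    ∑ k ∈ range (⌊x⌋₊ + 1), c k * (x - k) ^ a
      = ∑ k ∈ range N, c k * truncRpow (x - k) a := by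
  rw [← sum_subset (range_subset_range.mpr hN) fun k _ hk => ?_]
  · refine sum_congr rfl fun k hk => ?_
    have hkx : (k : ℝ) ≤ x :=
      (Nat.le_floor_iff hx).mp (Nat.lt_succ_iff.mp (mem_range.mp hk))
    rw [rpow_eq_truncRpow (by linarith) ha]
  · have hxk : x < k := (Nat.floor_lt hx).mp (by simpa using hk)
    rw [truncRpow_of_nonpos (by linarith), mul_zero]

theorem integral_rpow_mul_sub_rpow {a b T : ℝ} (ha : 0 < a) (hb : 0 < b) (hT : 0 < T) :
    ∫ x in 0..T, x ^ (a - 1) * (T - x) ^ (b - 1)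
      = T ^ (a + b - 1) * ProbabilityTheory.beta a b := by
  apply Complex.ofReal_injective
  have hbeta : (ProbabilityTheory.beta a b : ℂ) = Complex.betaIntegral a b := by
    rw [Complex.betaIntegral_eq_Gamma_mul_div _ _ (by simpa) (by simpa)]
    simp only [ProbabilityTheory.beta, Complex.ofReal_div, Complex.ofReal_mul,
      ← Complex.Gamma_ofReal, Complex.ofReal_add]
  rw [Complex.ofReal_mul, Complex.ofReal_cpow hT.le, hbeta]
  push_cast
  rw [← Complex.betaIntegral_scaled _ _ hT, ← intervalIntegral.integral_ofReal]
  refine integral_congr fun x hx => ?_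
  rw [uIcc_of_le hT.le] at hx
  rw [Complex.ofReal_mul, Complex.ofReal_cpow hx.1, Complex.ofReal_cpow (by linarith [hx.2])]
  push_cast
  rfl

theorem integral_truncRpow_mul_rpow {a b s k t : ℝ} (ha : 0 < a) (hb : 0 < b) (hsk : s ≤ k)
    (hst : s ≤ t) :
    ∫ τ in s..t, truncRpow (τ - k) (a - 1) * (t - τ) ^ (b - 1)
      = truncRpow (t - k) (a + b - 1) * ProbabilityTheory.beta a b := by
  have hind : (fun τ => truncRpow (τ - k) (a - 1) * (t - τ) ^ (b - 1))
      = (Set.Ioi k).indicator fun τ => (τ - k) ^ (a - 1) * (t - τ) ^ (b - 1) := by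
    ext τ
    simp only [Set.indicator_apply, Set.mem_Ioi]
    split_ifs with hτ
    · rw [truncRpow_of_pos (sub_pos.mpr hτ)]
    · rw [truncRpow_of_nonpos (by linarith [not_lt.mp hτ]), zero_mul]
  rw [integral_of_le hst, hind, setIntegral_indicator measurableSet_Ioi, Ioc_inter_Ioi,
    max_eq_right hsk]
  rcases lt_or_ge k t with hkt | htk
  · rw [← integral_of_le hkt.le, truncRpow_of_pos (sub_pos.mpr hkt),
      ← integral_rpow_mul_sub_rpow ha hb (sub_pos.mpr hkt)]
    simpa only [sub_self, sub_sub_sub_cancel_right] using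
      integral_comp_sub_right (a := k) (b := t) (fun x => x ^ (a - 1) * (t - k - x) ^ (b - 1)) k
  · rw [Ioc_eq_empty htk.not_gt, Measure.restrict_empty, integral_zero_measure,
      truncRpow_of_nonpos (by linarith), zero_mul]

theorem intervalIntegrable_truncRpow_mul_rpow {a b : ℝ} (ha : 0 < a) (hb : 0 < b) (k s t : ℝ) :
    IntervalIntegrable (fun τ => truncRpow (τ - k) a * (t - τ) ^ (b - 1)) volume s t := by
  have hsing : IntervalIntegrable (fun τ => (t - τ) ^ (b - 1)) volume s t := by
    simpa using (intervalIntegrable_rpow' (a := t - s) (b := 0) (by linarith)).comp_sub_left t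
  exact hsing.continuousOn_mul
    ((continuous_truncRpow ha).comp (continuous_id.sub continuous_const)).continuousOn

theorem caputo_deriv_fracBspline_general (α γ : ℝ) (hα : 1 < α) (hγ1 : γ < 1)
    (t : ℝ) (ht : 0 < t) :
    (1 / Real.Gamma (1 - γ)) *
        ∫ τ in (0:ℝ)..t,
          ((α / Real.Gamma (α + 1)) *
              ∑ k ∈ Finset.range (⌊τ⌋₊ + 1),
                (-1 : ℝ) ^ k * gbinom (α + 1) k * (τ - k) ^ (α - 1)) *
            (t - τ) ^ (-γ)
      = (1 / Real.Gamma (α - γ + 1)) *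
          ∑ k ∈ Finset.range (⌊t⌋₊ + 1),
            (-1 : ℝ) ^ k * gbinom (α + 1) k * (t - k) ^ (α - γ) := by
  set c : ℕ → ℝ := fun k => (-1 : ℝ) ^ k * gbinom (α + 1) k
  set C := α / Real.Gamma (α + 1) with hC
  have hintegrand : ∀ τ ∈ uIcc 0 t,
      (C * ∑ k ∈ range (⌊τ⌋₊ + 1), c k * (τ - k) ^ (α - 1)) * (t - τ) ^ (-γ)
        = ∑ k ∈ range (⌊t⌋₊ + 1),
            C * c k * (truncRpow (τ - k) (α - 1) * (t - τ) ^ ((1 - γ) - 1)) := by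
    intro τ hτ
    rw [uIcc_of_le ht.le] at hτ
    have hN : ⌊τ⌋₊ < ⌊t⌋₊ + 1 := Nat.lt_succ_of_le (Nat.floor_le_floor hτ.2)
    rw [sum_range_floor_rpow_eq_sum_truncRpow c hτ.1 (by linarith) hN, mul_sum, sum_mul,
      sub_sub_cancel_left]
    exact sum_congr rfl fun k _ => by ring
  have hconst : 1 / Real.Gamma (1 - γ) * C * ProbabilityTheory.beta α (1 - γ)
      = 1 / Real.Gamma (α - γ + 1) := by
    have hΓα := (Real.Gamma_pos_of_pos (by linarith : 0 < α)).ne'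
    have hΓγ := (Real.Gamma_pos_of_pos (by linarith : 0 < 1 - γ)).ne'
    rw [hC, ProbabilityTheory.beta, Real.Gamma_add_one (by linarith : α ≠ 0),
      show α - γ + 1 = α + (1 - γ) by ring]
    field_simp
  rw [integral_congr hintegrand, integral_finsetSum fun k _ =>
      (intervalIntegrable_truncRpow_mul_rpow (by linarith) (by linarith) _ _ _).const_mul _,
    sum_range_floor_rpow_eq_sum_truncRpow c ht.le (by linarith) (Nat.lt_succ_self _), mul_sum,
    mul_sum, ← hconst]
  refine sum_congr rfl fun k _ => ?_
  rw [intervalIntegral.integral_const_mul, integral_truncRpow_mul_rpow (by linarith)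
    (by linarith) (Nat.cast_nonneg k) ht.le, show α + (1 - γ) - 1 = α - γ by ring]
  ring

/-- Explicit differentiation rule for the fractional B-spline:
D^γ B_α(t) = Δ^{α+1} t_+^{α−γ} / Γ(α−γ+1), where the Caputo derivative on the
left is written explicitly as a fractional integral of the pointwise derivative
B_α′(τ) (a finite sum for each τ). -/
theorem caputo_deriv_fracBspline (α γ : ℝ) (hα : 1 < α) (hγ0 : 0 < γ) (hγ1 : γ < 1)
    (t : ℝ) (ht : 0 < t) :
    (1 / Real.Gamma (1 - γ)) *
        ∫ τ in (0:ℝ)..t,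
          ((α / Real.Gamma (α + 1)) *
              ∑ k ∈ Finset.range (⌊τ⌋₊ + 1),
                (-1 : ℝ) ^ k * gbinom (α + 1) k * (τ - k) ^ (α - 1)) *
            (t - τ) ^ (-γ)
      = (1 / Real.Gamma (α - γ + 1)) *
          ∑ k ∈ Finset.range (⌊t⌋₊ + 1),
            (-1 : ℝ) ^ k * gbinom (α + 1) k * (t - k) ^ (α - γ) :=
  caputo_deriv_fracBspline_general α γ hα hγ1 t ht
end

section
/- Let α > −1/2 and 0 < γ < α + 1/2. Then for every t ∈ ℝ, (1/Γ(α−γ+1)) ∑_{k∈ℕ} (−1)^k binom(α+1, k) (t−k)_+^{α−γ} = ∑_{j∈ℕ} (−1)^j binom(γ, j) B_{α−γ}(t−j); that is, the fractional derivative of the fractional B-spline of degree α satisfies D^γ B_α = Δ^γ B_{α−γ}, a fractional spline of degree α − γ. All sums involved have only finitely many nonzero terms for fixed t, since the truncated powers vanish for negative argument. -/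
/-- Fractional truncated power: t_+^α := t^α for t > 0 and 0 for t ≤ 0. -/
noncomputable def tpow (t α : ℝ) : ℝ := if 0 < t then t ^ α else 0

/-- Fractional B-spline of degree α:
B_α(t) := (1/Γ(α+1)) ∑_{k∈ℕ} (−1)^k binom(α+1, k) (t−k)_+^α. -/
noncomputable def fracBspline (α : ℝ) (t : ℝ) : ℝ :=
  (1 / Real.Gamma (α + 1)) * ∑' k : ℕ, (-1 : ℝ) ^ k * gbinom (α + 1) k * tpow (t - k) α

open Finset

theorem Summable.tsum_tsum_eq_tsum_sum_antidiagonal {E A : Type*} [AddCommGroup E]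
    [UniformSpace E] [IsUniformAddGroup E] [CompleteSpace E] [T0Space E]
    [AddMonoid A] [HasAntidiagonal A] {g : A × A → E} (hg : Summable g) :
    ∑' (j) (i), g (j, i) = ∑' n, ∑ p ∈ antidiagonal n, g p := by
  have hσ : Summable (g ∘ HasAntidiagonal.sigmaAntidiagonalEquivProd) :=
    (Equiv.summable_iff _).mpr hg
  rw [← hg.tsum_prod, ← HasAntidiagonal.sigmaAntidiagonalEquivProd.tsum_eq]
  exact hσ.tsum_sigma.trans (tsum_congr fun n ↦ (antidiagonal n).tsum_subtype g)

theorem tsum_mul_tsum_mul_add_eq_tsum_sum_antidiagonal {R : Type*} [NormedRing R]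
    [CompleteSpace R] {a b f : ℕ → R} {N : ℕ} (hf : ∀ n, N ≤ n → f n = 0) :
    ∑' j, a j * ∑' i, b i * f (j + i) = ∑' n, (∑ p ∈ antidiagonal n, a p.1 * b p.2) * f n := by
  have hg : Summable fun p : ℕ × ℕ ↦ a p.1 * b p.2 * f (p.1 + p.2) := by
    refine summable_of_ne_finset_zero (s := range N ×ˢ range N) fun p hp ↦ ?_
    rw [hf _ (by simp only [mem_product, mem_range, not_and_or, not_lt] at hp; omega), mul_zero]
  have hrow (j : ℕ) : Summable fun i ↦ b i * f (j + i) :=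
    summable_of_ne_finset_zero (s := range N) fun i hi ↦ by
      rw [hf _ (by simp only [mem_range, not_lt] at hi; omega), mul_zero]
  calc ∑' j, a j * ∑' i, b i * f (j + i) = ∑' (j) (i), a j * b i * f (j + i) := by
        simp_rw [← (hrow _).tsum_mul_left, mul_assoc]
    _ = ∑' n, ∑ p ∈ antidiagonal n, a p.1 * b p.2 * f (p.1 + p.2) :=
        hg.tsum_tsum_eq_tsum_sum_antidiagonal
    _ = ∑' n, (∑ p ∈ antidiagonal n, a p.1 * b p.2) * f n := by
        refine tsum_congr fun n ↦ ?_
        rw [sum_mul]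
        exact sum_congr rfl fun p hp ↦ by rw [mem_antidiagonal.mp hp]

theorem sum_antidiagonal_neg_one_pow_mul_gbinom (x y : ℝ) (n : ℕ) :
    ∑ p ∈ antidiagonal n, (-1) ^ p.1 * gbinom x p.1 * ((-1) ^ p.2 * gbinom y p.2)
      = (-1) ^ n * gbinom (x + y) n := by
  rw [gbinom_eq_ringChoose, Ring.add_choose_eq n (Commute.all x y), mul_sum]
  refine sum_congr rfl fun p hp ↦ ?_
  rw [← mem_antidiagonal.mp hp, pow_add, gbinom_eq_ringChoose, gbinom_eq_ringChoose]
  ring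

theorem tpow_sub_natCast_of_ceil_le {t : ℝ} {n : ℕ} (hn : ⌈t⌉₊ ≤ n) (β : ℝ) :
    tpow (t - n) β = 0 :=
  if_neg (not_lt.mpr (sub_nonpos.mpr (Nat.ceil_le.mp hn)))

theorem fracBspline_sub_natCast (β t : ℝ) (j : ℕ) :
    fracBspline β (t - j) = 1 / Real.Gamma (β + 1) *
      ∑' i : ℕ, (-1) ^ i * gbinom (β + 1) i * tpow (t - ↑(j + i)) β := by
  simp only [fracBspline, Nat.cast_add, sub_sub]

theorem fracDeriv_fracBspline_eq_gdiff_general (α γ : ℝ) (t : ℝ) :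
    (1 / Real.Gamma (α - γ + 1)) *
        ∑' k : ℕ, (-1 : ℝ) ^ k * gbinom (α + 1) k * tpow (t - k) (α - γ)
      = ∑' j : ℕ, (-1 : ℝ) ^ j * gbinom γ j * fracBspline (α - γ) (t - j) := by
  set β := α - γ
  have hα : α + 1 = γ + (β + 1) := by ring
  calc _ = 1 / Real.Gamma (β + 1) * ∑' n : ℕ, (∑ p ∈ antidiagonal n,
          (-1) ^ p.1 * gbinom γ p.1 * ((-1) ^ p.2 * gbinom (β + 1) p.2)) * tpow (t - n) β := by
        simp_rw [hα, sum_antidiagonal_neg_one_pow_mul_gbinom]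
    _ = 1 / Real.Gamma (β + 1) * ∑' j : ℕ, (-1) ^ j * gbinom γ j *
          ∑' i : ℕ, (-1) ^ i * gbinom (β + 1) i * tpow (t - ↑(j + i)) β := by
        rw [tsum_mul_tsum_mul_add_eq_tsum_sum_antidiagonal (f := fun n : ℕ ↦ tpow (t - n) β)
          fun n hn ↦ tpow_sub_natCast_of_ceil_le hn β]
    _ = _ := by
        rw [← tsum_mul_left]
        exact tsum_congr fun j ↦ by rw [fracBspline_sub_natCast]; ring

/-- The fractional derivative of the fractional B-spline of degree α satisfies
D^γ B_α = Δ^γ B_{α−γ}, a fractional spline of degree α − γ. -/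
theorem fracDeriv_fracBspline_eq_gdiff (α γ : ℝ) (hα : -(1/2) < α)
    (hγ0 : 0 < γ) (hγ : γ < α + 1/2) (t : ℝ) :
    (1 / Real.Gamma (α - γ + 1)) *
        ∑' k : ℕ, (-1 : ℝ) ^ k * gbinom (α + 1) k * tpow (t - k) (α - γ)
      = ∑' j : ℕ, (-1 : ℝ) ^ j * gbinom γ j * fracBspline (α - γ) (t - j) :=
  fracDeriv_fracBspline_eq_gdiff_general α γ t
end

section
/- Let α > 0. Then the fractional B-spline B_α satisfies the two-scale refinement equation: for every t ∈ ℝ, B_α(t) = ∑_{k∈ℕ} a_k^{(α)} B_α(2t − k), where the mask coefficients are a_k^{(α)} := 2^{−α} binom(α+1, k). For each fixed t the sum has only finitely many nonzero terms (those with k ≤ 2t), since B_α vanishes on the negative axis. -/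
open Finset Polynomial
open scoped Nat

/-!
Write `B_α(t) = Γ(α+1)⁻¹ ∑ₘ aₘ (t - m)₊^α` with `aₘ = (-1)ᵐ binom(α+1, m)`. Substituting this into
the right-hand side and collecting the terms with the same `(2t - n)₊^α` produces the convolution
`∑_{k+j=n} binom(α+1, k) aⱼ`, the `n`-th coefficient of `(1+z)^(α+1) (1-z)^(α+1) = (1-z²)^(α+1)`:
it is `a_{n/2}` for even `n` and `0` for odd `n`. Both sides of this identity are polynomials in
`α`, so it suffices to check it for natural exponents, where it is a comparison of coefficients of
polynomials. What remains is `2^(-α) (2t - 2m)₊^α = (t - m)₊^α`.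
-/

theorem sum_antidiagonal_choose_mul_neg_one_pow_mul_choose {R : Type*} [CommRing R] (m n : ℕ) :
    ∑ p ∈ antidiagonal n, (m.choose p.1 : R) * ((-1) ^ p.2 * (m.choose p.2 : R))
      = if 2 ∣ n then (-1) ^ (n / 2) * (m.choose (n / 2) : R) else 0 := by
  have h_one_sub : ((1 - X : R[X]) ^ m) = ((1 + X) ^ m).comp (C (-1) * X) := by
    simp [sub_eq_add_neg]
  have h_coeff (k : ℕ) : ((1 - X : R[X]) ^ m).coeff k = (-1) ^ k * m.choose k := by
    rw [h_one_sub, comp_C_mul_X_coeff, coeff_one_add_X_pow, mul_comm]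
  have h_prod : (1 + X : R[X]) ^ m * (1 - X) ^ m = expand R 2 ((1 - X) ^ m) := by
    rw [← mul_pow, map_pow]
    simp only [map_sub, map_one, expand_X]
    ring
  simpa only [coeff_mul, coeff_one_add_X_pow, h_coeff, coeff_expand two_pos]
    using congrArg (coeff · n) h_prod

noncomputable def gbinomPoly (k : ℕ) : ℝ[X] := C (k ! : ℝ)⁻¹ * descPochhammer ℝ k

theorem eval_gbinomPoly (x : ℝ) (k : ℕ) : (gbinomPoly k).eval x = gbinom x k := by
  rw [gbinomPoly, eval_mul, eval_C, descPochhammer_eval_eq_prod_range, gbinom, inv_mul_eq_div]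

theorem gbinom_natCast (m k : ℕ) : gbinom m k = m.choose k := by
  rw [← eval_gbinomPoly, gbinomPoly, eval_mul, eval_C, descPochhammer_eval_eq_descFactorial,
    Nat.descFactorial_eq_factorial_mul_choose, Nat.cast_mul, inv_mul_cancel_left₀]
  exact_mod_cast k.factorial_ne_zero

theorem sum_antidiagonal_gbinom_mul_neg_one_pow_mul_gbinom (x : ℝ) (n : ℕ) :
    ∑ p ∈ antidiagonal n, gbinom x p.1 * ((-1) ^ p.2 * gbinom x p.2)
      = if 2 ∣ n then (-1) ^ (n / 2) * gbinom x (n / 2) else 0 := by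
  let P : ℝ[X] := ∑ p ∈ antidiagonal n, gbinomPoly p.1 * (C ((-1) ^ p.2) * gbinomPoly p.2)
  let Q : ℝ[X] := if 2 ∣ n then C ((-1) ^ (n / 2)) * gbinomPoly (n / 2) else 0
  have h_evalP (y : ℝ) :
      P.eval y = ∑ p ∈ antidiagonal n, gbinom y p.1 * ((-1) ^ p.2 * gbinom y p.2) := by
    simp only [P, eval_finsetSum, eval_mul, eval_C, eval_gbinomPoly]
  have h_evalQ (y : ℝ) : Q.eval y = if 2 ∣ n then (-1) ^ (n / 2) * gbinom y (n / 2) else 0 := by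
    split_ifs <;> simp [Q, *, eval_gbinomPoly]
  suffices P = Q by simpa only [h_evalP, h_evalQ] using congrArg (eval x) this
  refine eq_of_infinite_eval_eq P Q <| (Set.infinite_range_of_injective Nat.cast_injective).mono ?_
  rintro _ ⟨m, rfl⟩
  simp only [Set.mem_ofPred_eq, h_evalP, h_evalQ, gbinom_natCast]
  exact sum_antidiagonal_choose_mul_neg_one_pow_mul_choose m n

theorem tsum_mul_tsum_add_eq_tsum_antidiagonal {R : Type*} [Semiring R] [TopologicalSpace R]
    (b a g : ℕ → R) {N : ℕ} (hg : ∀ n, N ≤ n → g n = 0) :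
    ∑' k, b k * ∑' j, a j * g (k + j)
      = ∑' n, (∑ p ∈ antidiagonal n, b p.1 * a p.2) * g n := by
  have h_inner (k : ℕ) : ∑' j, a j * g (k + j) = ∑ j ∈ range (N - k), a j * g (k + j) :=
    tsum_eq_sum fun j hj ↦ by rw [hg _ (by simp at hj; omega), mul_zero]
  simp_rw [h_inner]
  rw [tsum_eq_sum (s := range N) fun k hk ↦ by simp_all,
    tsum_eq_sum (s := range N) fun n hn ↦ by rw [hg _ (by simpa using hn), mul_zero]]
  simp_rw [mul_sum, sum_mul, ← sum_range_diag_flip N]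
  refine sum_congr rfl fun n _ ↦ ?_
  rw [Nat.sum_antidiagonal_eq_sum_range_succ (fun k j ↦ b k * a j * g n)]
  refine sum_congr rfl fun k hk ↦ ?_
  rw [Nat.add_sub_cancel' (by simpa [Nat.lt_succ_iff] using hk), mul_assoc]

theorem tpow_of_nonpos {s α : ℝ} (hs : s ≤ 0) : tpow s α = 0 :=
  if_neg hs.not_gt

theorem two_rpow_neg_mul_tpow_two_mul (s α : ℝ) : (2 : ℝ) ^ (-α) * tpow (2 * s) α = tpow s α := by
  by_cases hs : 0 < s
  · rw [tpow, tpow, if_pos (by positivity), if_pos hs,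
      Real.mul_rpow zero_le_two hs.le, Real.rpow_neg zero_le_two, inv_mul_cancel_left₀]
    positivity
  · rw [tpow_of_nonpos (by linarith), tpow_of_nonpos (by linarith), mul_zero]

theorem fracBspline_refinement_general (α : ℝ) (t : ℝ) :
    fracBspline α t
      = ∑' k : ℕ, (2 : ℝ) ^ (-α) * gbinom (α + 1) k * fracBspline α (2 * t - k) := by
  set a : ℕ → ℝ := fun j ↦ (-1) ^ j * gbinom (α + 1) j
  set g : ℕ → ℝ := fun n ↦ tpow (2 * t - n) α
  have hg (n : ℕ) (hn : ⌈2 * t⌉₊ ≤ n) : g n = 0 :=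
    tpow_of_nonpos (by have := Nat.ceil_le.mp hn; linarith)
  have h_mask (n : ℕ) : ∑ p ∈ antidiagonal n, gbinom (α + 1) p.1 * a p.2
      = if 2 ∣ n then a (n / 2) else 0 :=
    sum_antidiagonal_gbinom_mul_neg_one_pow_mul_gbinom (α + 1) n
  set c := 1 / Real.Gamma (α + 1)
  symm
  calc ∑' k : ℕ, (2 : ℝ) ^ (-α) * gbinom (α + 1) k * fracBspline α (2 * t - k)
      = 2 ^ (-α) * c * ∑' k, gbinom (α + 1) k * ∑' j, a j * g (k + j) := by
        simp only [fracBspline, ← tsum_mul_left]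
        refine tsum_congr fun k ↦ tsum_congr fun j ↦ ?_
        simp only [a, g, Nat.cast_add, sub_sub]
        ring
    _ = 2 ^ (-α) * c * ∑' n, (if 2 ∣ n then a (n / 2) else 0) * g n := by
        rw [tsum_mul_tsum_add_eq_tsum_antidiagonal _ _ _ hg]
        simp_rw [h_mask]
    _ = 2 ^ (-α) * c * ∑' m, a m * g (2 * m) := by
        rw [← (mul_right_injective₀ two_ne_zero).tsum_eq]
        · simp
        · intro n hn
          obtain ⟨m, rfl⟩ : 2 ∣ n := by_contra fun h ↦ hn (by simp [h])
          exact ⟨m, rfl⟩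
    _ = fracBspline α t := by
        simp only [fracBspline, ← tsum_mul_left]
        refine tsum_congr fun m ↦ ?_
        simp only [a, g, Nat.cast_mul, Nat.cast_ofNat, ← mul_sub,
          ← two_rpow_neg_mul_tpow_two_mul (t - m)]
        ring

/-- Two-scale refinement equation for the fractional B-spline:
B_α(t) = ∑_{k∈ℕ} 2^{−α} binom(α+1, k) B_α(2t − k). -/
theorem fracBspline_refinement (α : ℝ) (hα : 0 < α) (t : ℝ) :
    fracBspline α t
      = ∑' k : ℕ, (2 : ℝ) ^ (-α) * gbinom (α + 1) k * fracBspline α (2 * t - k) :=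
  fracBspline_refinement_general α t
end
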